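/- arXiv:1004.2151 — 6 statements merged into one kernel-verified Lean document; each statement's English description precedes it below -/
import Mathlib

section
/- If I is a line segment of length at most 1 in a normed space, r > 1, δ > 0, and k ≥ 4/δ is a positive integer, then the δ-restricted r-dimensional Hausdorff premeasure of the open (1/k)-neighbourhood of I is at most 4^r · k^{-(r-1)}. -/
open Metric EMetric Set
open scoped ENNReal NNReal

/-- The δ-restricted r-dimensional Hausdorff premeasure. -/
noncomputable def preHausdorff {X : Type*} [EMetricSpace X] (r δ : ℝ) (E : Set X) : ℝ≥0∞ :=
  ⨅ (S : ℕ → Set X) (_ : E ⊆ ⋃ i, S i) (_ : ∀ i, EMetric.diam (S i) ≤ ENNReal.ofReal δ),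
    ∑' i, EMetric.diam (S i) ^ r

/-! Dividing the segment into `k` pieces of length at most `1 / k`, the `(1 / k)`-neighbourhood
of the segment is covered by the `k` open balls of radius `2 / k` around the division points.
Each has diameter at most `4 / k ≤ δ`, so the premeasure is at most `k * (4 / k) ^ r`. -/

theorem preHausdorff_le_tsum_of_cover {X : Type*} [EMetricSpace X] {r δ : ℝ} {E : Set X}
    (S : ℕ → Set X) (hE : E ⊆ ⋃ i, S i) (hS : ∀ i, ediam (S i) ≤ ENNReal.ofReal δ) :
    preHausdorff r δ E ≤ ∑' i, ediam (S i) ^ r :=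
  iInf₂_le_of_le S hE (iInf_le _ hS)

theorem preHausdorff_le_of_finite_cover {X : Type*} [EMetricSpace X] {r δ : ℝ} (hr : 0 < r)
    {E : Set X} {n : ℕ} (S : ℕ → Set X) (hE : E ⊆ ⋃ i < n, S i) {d : ℝ≥0∞}
    (hdδ : d ≤ ENNReal.ofReal δ) (hS : ∀ i < n, ediam (S i) ≤ d) :
    preHausdorff r δ E ≤ n * d ^ r := by
  classical
  set T : ℕ → Set X := fun i => if i < n then S i else ∅
  have hT : ∀ i, ediam (T i) ≤ d := fun i => by
    by_cases hi : i < n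
    · simpa [T, hi] using hS i hi
    · simp [T, hi]
  have hcover : E ⊆ ⋃ i, T i := fun x hx => by
    obtain ⟨i, hi, hxi⟩ := mem_iUnion₂.1 (hE hx)
    exact mem_iUnion.2 ⟨i, by simpa [T, hi] using hxi⟩
  have hvanish : ∀ i ∉ Finset.range n, ediam (T i) ^ r = 0 := fun i hi => by
    simp [T, Finset.mem_range.not.1 hi, ENNReal.zero_rpow_of_pos hr]
  calc preHausdorff r δ E ≤ ∑' i, ediam (T i) ^ r :=
        preHausdorff_le_tsum_of_cover T hcover fun i => (hT i).trans hdδ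
    _ = ∑ i ∈ Finset.range n, ediam (T i) ^ r := tsum_eq_sum hvanish
    _ ≤ ∑ _i ∈ Finset.range n, d ^ r :=
        Finset.sum_le_sum fun i _ => ENNReal.rpow_le_rpow (hT i) hr.le
    _ = n * d ^ r := by simp

theorem ediam_ball_le {X : Type*} [PseudoMetricSpace X] (x : X) (ρ : ℝ) :
    ediam (Metric.ball x ρ) ≤ ENNReal.ofReal (2 * ρ) :=
  ediam_le_of_forall_dist_le fun y hy z hz => by
    linarith [dist_triangle_right y z x, mem_ball.1 hy, mem_ball.1 hz]

theorem exists_lt_abs_sub_div_le {t : ℝ} (ht : t ∈ Icc (0 : ℝ) 1) {k : ℕ} (hk : 0 < k) :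
    ∃ i < k, |t - i / k| ≤ 1 / k := by
  have hkR : (0 : ℝ) < k := by exact_mod_cast hk
  suffices ∃ i < k, |t * k - i| ≤ 1 by
    obtain ⟨i, hik, hi⟩ := this
    refine ⟨i, hik, ?_⟩
    rwa [← mul_div_cancel_right₀ t hkR.ne', ← sub_div, abs_div, abs_of_pos hkR,
      div_le_div_iff_of_pos_right hkR]
  rcases lt_or_ge (t * k) k with htk | htk
  · refine ⟨⌊t * k⌋₊, (Nat.floor_lt (by nlinarith [ht.1])).2 htk, abs_le.2 ⟨?_, ?_⟩⟩
    · linarith [Nat.floor_le (mul_nonneg ht.1 hkR.le)]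
    · linarith [Nat.lt_floor_add_one (t * k)]
  · refine ⟨k - 1, Nat.sub_lt hk one_pos, abs_le.2 ⟨?_, ?_⟩⟩ <;>
      rw [Nat.cast_pred hk] <;> nlinarith [ht.2]

section Segment

variable {E : Type*} [SeminormedAddCommGroup E] [NormedSpace ℝ E]

open AffineMap

theorem segment_subset_iUnion_closedBall (a b : E) {k : ℕ} (hk : 0 < k) :
    segment ℝ a b ⊆ ⋃ i < k, Metric.closedBall (lineMap a b ((i : ℝ) / k)) (dist a b / k) := by
  rw [segment_eq_image_lineMap]
  rintro _ ⟨t, ht, rfl⟩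
  obtain ⟨i, hik, hi⟩ := exists_lt_abs_sub_div_le ht hk
  refine mem_iUnion₂.2 ⟨i, hik, ?_⟩
  rw [Metric.mem_closedBall, dist_lineMap_lineMap, Real.dist_eq]
  exact (mul_le_mul_of_nonneg_right hi dist_nonneg).trans_eq (one_div_mul_eq_div _ _)

theorem thickening_segment_subset_iUnion_ball (a b : E) {ε : ℝ} (hε : 0 < ε) {k : ℕ}
    (hk : 0 < k) :
    thickening ε (segment ℝ a b) ⊆
      ⋃ i < k, Metric.ball (lineMap a b ((i : ℝ) / k)) (ε + dist a b / k) :=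
  calc thickening ε (segment ℝ a b)
      ⊆ thickening ε (⋃ i < k, Metric.closedBall (lineMap a b ((i : ℝ) / k)) (dist a b / k)) :=
        thickening_subset_of_subset ε (segment_subset_iUnion_closedBall a b hk)
    _ = ⋃ i < k, Metric.ball (lineMap a b ((i : ℝ) / k)) (ε + dist a b / k) := by
        simp only [thickening_iUnion, thickening_closedBall hε (by positivity : 0 ≤ dist a b / k)]

end Segment

theorem stmt0_general {E : Type*} [NormedAddCommGroup E] [NormedSpace ℝ E]
    (a b : E) (hab : ‖a - b‖ ≤ 1) (r δ : ℝ) (hr : 1 < r) (hδ : 0 < δ)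
    (k : ℕ) (hkδ : 4 / δ ≤ (k : ℝ)) :
    preHausdorff r δ (Metric.thickening (1 / k) (segment ℝ a b)) ≤
      ENNReal.ofReal (4 ^ r * (k : ℝ) ^ (-(r - 1))) := by
  have hkR : (0 : ℝ) < k := (div_pos four_pos hδ).trans_le hkδ
  have hk : 0 < k := by exact_mod_cast hkR
  have h4kδ : 4 / k ≤ δ := (div_le_comm₀ hkR hδ).2 hkδ
  have hdiam : ∀ i < k,
      ediam (Metric.ball (AffineMap.lineMap a b ((i : ℝ) / k)) (1 / k + dist a b / k)) ≤
        ENNReal.ofReal (4 / k) := fun i _ => by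
    refine (ediam_ball_le _ _).trans (ENNReal.ofReal_le_ofReal ?_)
    rw [dist_eq_norm, ← add_div, ← mul_div_assoc]
    gcongr
    linarith
  calc preHausdorff r δ (thickening (1 / k) (segment ℝ a b))
      ≤ k * ENNReal.ofReal (4 / k) ^ r :=
        preHausdorff_le_of_finite_cover (by linarith) _
          (thickening_segment_subset_iUnion_ball a b (by positivity) hk)
          (ENNReal.ofReal_le_ofReal h4kδ) hdiam
    _ = ENNReal.ofReal (4 ^ r * (k : ℝ) ^ (-(r - 1))) := by
      rw [ENNReal.ofReal_rpow_of_nonneg (by positivity) (by linarith), ← ENNReal.ofReal_natCast,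
        ← ENNReal.ofReal_mul hkR.le, Real.div_rpow (by norm_num) hkR.le, neg_sub,
        Real.rpow_sub hkR, Real.rpow_one]
      congr 1
      field_simp

theorem stmt0 {E : Type*} [NormedAddCommGroup E] [NormedSpace ℝ E]
    (a b : E) (hab : ‖a - b‖ ≤ 1) (r δ : ℝ) (hr : 1 < r) (hδ : 0 < δ)
    (k : ℕ) (hk : 0 < k) (hkδ : 4 / δ ≤ (k : ℝ)) :
    preHausdorff r δ (Metric.thickening (1 / k) (segment ℝ a b)) ≤
      ENNReal.ofReal (4 ^ r * (k : ℝ) ^ (-(r - 1))) :=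
  stmt0_general a b hab r δ hr hδ k hkδ
end

section
/- If L ⊆ ℝ^d is a countable union of line segments, then there exists a G_δ set O ⊆ ℝ^d with L ⊆ O whose Hausdorff dimension equals one. -/
/-!
Every set `s` of a metric space lies in a `G_δ` set of the same Hausdorff dimension: for
`r > dimH s` we have `μH[r] s = 0`, so for each `n` the set `s` is covered by open sets of
diameter at most `1/n` whose `r`-th powers of diameters sum to at most `1/n` (thicken a
near-optimal cover slightly), and the intersection over `n` of these unions is `μH[r]`-null.
A segment has finite `μH[1]`, so a countable union of segments has dimension at most one;
adding a fixed nondegenerate (closed) segment to its `G_δ` hull makes the dimension exactly one.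
-/

open Set Metric MeasureTheory Filter Topology
open scoped ENNReal NNReal

theorem exists_pos_add_two_mul_lt_and_rpow_lt {d δ : ℝ≥0∞} (hd : d < δ) {r : ℝ} (hr : 0 ≤ r)
    {c : ℝ≥0∞} (hc : c ≠ 0) :
    ∃ η : ℝ≥0, 0 < η ∧ d + 2 * η < δ ∧ (d + 2 * η) ^ r < d ^ r + c := by
  have hcont : Tendsto (fun η : ℝ≥0 => d + 2 * (η : ℝ≥0∞)) (𝓝 0) (𝓝 d) := by
    refine Continuous.tendsto' ?_ 0 _ (by simp)
    fun_prop (disch := simp)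
  have hδ := hcont.eventually (gt_mem_nhds hd)
  have hc := ((ENNReal.continuous_rpow_const.tendsto _).comp hcont).eventually
    (gt_mem_nhds (ENNReal.lt_add_right (ENNReal.rpow_ne_top_of_nonneg hr (ne_top_of_lt hd)) hc))
  obtain ⟨η, ⟨hηδ, hηc⟩, hη0⟩ := ((hδ.and hc).filter_mono nhdsWithin_le_nhds).and
    (self_mem_nhdsWithin : Ioi (0 : ℝ≥0) ∈ 𝓝[>] 0) |>.exists
  exact ⟨η, hη0, hηδ, hηc⟩

section HausdorffHull

variable {X : Type*} [EMetricSpace X]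

theorem exists_cover_of_hausdorffMeasure_eq_zero [MeasurableSpace X] [BorelSpace X]
    {r : ℝ} {s : Set X} (hs : μH[r] s = 0) {δ ε : ℝ≥0∞} (hδ : 0 < δ) (hε : 0 < ε) :
    ∃ t : ℕ → Set X, s ⊆ ⋃ n, t n ∧ (∀ n, ediam (t n) ≤ δ) ∧
      ∑' n, ⨆ _ : (t n).Nonempty, ediam (t n) ^ r < ε := by
  rw [Measure.hausdorffMeasure_apply] at hs
  simp only [ENNReal.iSup_eq_zero] at hs
  simpa only [← hs δ hδ, iInf_lt_iff, exists_prop] using hε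

theorem exists_isOpen_cover_of_hausdorffMeasure_eq_zero [MeasurableSpace X] [BorelSpace X]
    {r : ℝ} (hr : 0 < r) {s : Set X} (hs : μH[r] s = 0) {δ ε : ℝ≥0∞} (hδ : 0 < δ) (hδ' : δ ≠ ∞)
    (hε : 0 < ε) :
    ∃ U : ℕ → Set X, (∀ n, IsOpen (U n)) ∧ s ⊆ ⋃ n, U n ∧ (∀ n, ediam (U n) ≤ δ) ∧
      ∑' n, ediam (U n) ^ r ≤ ε := by
  obtain ⟨t, hst, htδ, htε⟩ :=
    exists_cover_of_hausdorffMeasure_eq_zero hs (ENNReal.half_pos hδ.ne') (ENNReal.half_pos hε.ne')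
  obtain ⟨ε', hε'0, hε'⟩ := ENNReal.exists_pos_sum_of_countable (ENNReal.half_pos hε.ne').ne' ℕ
  have hthick n := exists_pos_add_two_mul_lt_and_rpow_lt
    ((htδ n).trans_lt (ENNReal.half_lt_self hδ.ne' hδ')) hr.le (ENNReal.coe_ne_zero.2 (hε'0 n).ne')
  choose η hη0 hηδ hηr using hthick
  refine ⟨fun n => thickening (η n) (t n), fun n => isOpen_thickening, ?_, ?_, ?_⟩
  · exact hst.trans (iUnion_mono fun n => self_subset_thickening (by exact_mod_cast hη0 n) _)
  · exact fun n => (ediam_thickening_le _).trans (hηδ n).le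
  · calc ∑' n, ediam (thickening (η n) (t n)) ^ r
        ≤ ∑' n, ((⨆ _ : (t n).Nonempty, ediam (t n) ^ r) + ε' n) := by
          refine ENNReal.tsum_le_tsum fun n => ?_
          rcases (t n).eq_empty_or_nonempty with h | h
          · simp [h, ENNReal.zero_rpow_of_pos hr]
          · rw [iSup_pos h]
            exact (ENNReal.rpow_le_rpow (ediam_thickening_le _) hr.le).trans (hηr n).le
      _ = ∑' n, (⨆ _ : (t n).Nonempty, ediam (t n) ^ r) + ∑' n, (ε' n : ℝ≥0∞) := ENNReal.tsum_add
      _ ≤ ε / 2 + ε / 2 := add_le_add htε.le hε'.le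
      _ = ε := ENNReal.add_halves ε

theorem exists_isGδ_superset_hausdorffMeasure_eq_zero [MeasurableSpace X] [BorelSpace X]
    {r : ℝ} (hr : 0 < r) {s : Set X} (hs : μH[r] s = 0) :
    ∃ G, s ⊆ G ∧ IsGδ G ∧ μH[r] G = 0 := by
  set δ : ℕ → ℝ≥0∞ := fun n => ((n : ℝ≥0∞) + 1)⁻¹
  have hδ : Tendsto δ atTop (𝓝 0) := by
    simpa [δ, Function.comp_def] using
      ENNReal.tendsto_inv_nat_nhds_zero.comp (tendsto_add_atTop_nat 1)
  choose U hUo hsU hUδ hUsum using fun n =>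
    exists_isOpen_cover_of_hausdorffMeasure_eq_zero hr hs (δ := δ n) (ε := δ n)
      (by simp [δ]) (by simp [δ]) (by simp [δ])
  refine ⟨⋂ n, ⋃ i, U n i, subset_iInter hsU,
    .iInter fun n => (isOpen_iUnion (hUo n)).isGδ, nonpos_iff_eq_zero.1 ?_⟩
  calc μH[r] (⋂ n, ⋃ i, U n i) ≤ liminf (fun n => ∑' i, ediam (U n i) ^ r) atTop :=
        Measure.hausdorffMeasure_le_liminf_tsum r _ δ hδ U (.of_forall hUδ)
          (.of_forall fun n => iInter_subset _ n)
    _ ≤ liminf δ atTop := liminf_le_liminf (.of_forall hUsum)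
    _ = 0 := hδ.liminf_eq

theorem exists_isGδ_superset_dimH_le {s : Set X} {d : ℝ≥0} (h : dimH s < d) :
    ∃ G, s ⊆ G ∧ IsGδ G ∧ dimH G ≤ d := by
  borelize X
  have hd : 0 < (d : ℝ) := NNReal.coe_pos.2 (ENNReal.coe_pos.1 (pos_of_gt h))
  obtain ⟨G, hsG, hG, hG0⟩ :=
    exists_isGδ_superset_hausdorffMeasure_eq_zero hd (hausdorffMeasure_of_dimH_lt h)
  exact ⟨G, hsG, hG, dimH_le_of_hausdorffMeasure_ne_top (hG0 ▸ ENNReal.zero_ne_top)⟩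

theorem exists_isGδ_superset_dimH_eq (s : Set X) :
    ∃ G, s ⊆ G ∧ IsGδ G ∧ dimH G = dimH s := by
  rcases eq_top_or_lt_top (dimH s) with hs | hs
  · exact ⟨univ, subset_univ s, IsGδ.univ, hs ▸ top_unique (hs ▸ dimH_mono (subset_univ s))⟩
  obtain ⟨u, -, hDu, hu⟩ := exists_seq_strictAnti_tendsto (dimH s).toNNReal
  have hsD : dimH s = (dimH s).toNNReal := (ENNReal.coe_toNNReal hs.ne).symm
  choose G hsG hG hGu using fun n =>
    exists_isGδ_superset_dimH_le (s := s) (d := u n) (hsD ▸ ENNReal.coe_lt_coe.2 (hDu n))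
  refine ⟨⋂ n, G n, subset_iInter hsG, .iInter hG,
    le_antisymm ?_ (dimH_mono (subset_iInter hsG))⟩
  rw [hsD]
  exact ge_of_tendsto' (ENNReal.tendsto_coe.2 hu) fun n =>
    (dimH_mono (iInter_subset G n)).trans (hGu n)

end HausdorffHull

section Segment

variable {E : Type*} [NormedAddCommGroup E] [NormedSpace ℝ E]

theorem isCompact_segment (x y : E) : IsCompact (segment ℝ x y) := by
  rw [segment_eq_image_lineMap]
  exact isCompact_Icc.image AffineMap.lineMap_continuous

theorem dimH_segment_le (x y : E) : dimH (segment ℝ x y) ≤ 1 := by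
  borelize E
  simpa using dimH_le_of_hausdorffMeasure_ne_top (d := 1) (by simp [edist_ne_top])

theorem dimH_segment {x y : E} (h : x ≠ y) : dimH (segment ℝ x y) = 1 := by
  borelize E
  simpa using dimH_of_hausdorffMeasure_ne_zero_ne_top (d := 1) (by simpa using h)
    (by simp [edist_ne_top])

end Segment

theorem stmt1 (d : ℕ) (hd : 1 ≤ d) (L : Set (EuclideanSpace ℝ (Fin d)))
    (f : ℕ → EuclideanSpace ℝ (Fin d) × EuclideanSpace ℝ (Fin d))
    (hL : L = ⋃ m, segment ℝ (f m).1 (f m).2) :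
    ∃ O : Set (EuclideanSpace ℝ (Fin d)), L ⊆ O ∧ IsGδ O ∧ dimH O = 1 := by
  obtain ⟨G, hLG, hG, hGL⟩ := exists_isGδ_superset_dimH_eq L
  have hL1 : dimH L ≤ 1 := hL ▸ (dimH_iUnion _).trans_le (iSup_le fun m => dimH_segment_le _ _)
  set e := EuclideanSpace.single (⟨0, hd⟩ : Fin d) (1 : ℝ)
  have he : (0 : EuclideanSpace ℝ (Fin d)) ≠ e := by simp [e, eq_comm]
  refine ⟨G ∪ segment ℝ 0 e, subset_union_of_subset_left hLG _,
    hG.union (isCompact_segment 0 e).isClosed.isGδ, ?_⟩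
  rw [dimH_union, dimH_segment he, hGL, max_eq_right hL1]
end

section
/- For d ≥ 1, if E ⊆ ℝ^d is a universal differentiability set (i.e., every Lipschitz function f : ℝ^d → ℝ has a point of Fréchet differentiability in E), then the Hausdorff dimension of E is at least one. -/
/-!
Projection onto a coordinate axis does not increase Hausdorff dimension, so if `dimH E < 1` the
projection `π '' E ⊆ ℝ` is Lebesgue null. For a null set `N ⊆ ℝ`, Zahorski's construction gives a
Lipschitz function differentiable at no point of `N`: take open sets `G₀ ⊇ G₁ ⊇ ⋯ ⊇ N` with
`|G k| ≤ 2⁻ᵏ` such that `G (k + 1)` fills at most `1/16` of every component of `G k`, and integrate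
the indicator of `A = ⋃ₖ G (2k) \ G (2k + 1)`. Around `x ∈ N`, an interval of a quarter of the
length of the component of `G k` containing `x` meets `A` in density at least `3/4` for even `k`
and at most `1/4` for odd `k`, so the difference quotients at `x` oscillate. Composed with `π`,
which has a linear right inverse, this function is Lipschitz on `ℝᵈ` and differentiable at no
point of `E`.
-/

open Set MeasureTheory Filter Topology
open scoped ENNReal Interval

lemma Set.OrdConnected.exists_uIoc_subset {C : Set ℝ} (hC : C.OrdConnected) {x r : ℝ} (hx : x ∈ C)
    (hr : 0 ≤ r) (hC_vol : ENNReal.ofReal (2 * r) < volume C) : ∃ y, |y - x| = r ∧ Ι x y ⊆ C := by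
  by_contra! h
  have hright : x + r ∉ C := fun hy =>
    h _ (by simp [abs_of_nonneg hr]) (uIoc_subset_uIcc.trans (hC.uIcc_subset hx hy))
  have hleft : x - r ∉ C := fun hy =>
    h _ (by simp [abs_of_nonneg hr]) (uIoc_subset_uIcc.trans (hC.uIcc_subset hx hy))
  have hsub : C ⊆ Ioo (x - r) (x + r) := fun z hz => by
    constructor
    · by_contra! hzx
      exact hleft (hC.out hz hx ⟨hzx, by linarith⟩)
    · by_contra! hzx
      exact hright (hC.out hx hz ⟨by linarith, hzx⟩)
  refine hC_vol.not_ge ((measure_mono hsub).trans_eq ?_)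
  rw [Real.volume_Ioo]
  ring_nf

lemma exists_uIoc_subset_of_volume_inter_connectedComponentIn_le {G G' : Set ℝ} {x : ℝ}
    (hG : IsOpen G) (hG_fin : volume G ≠ ∞) (hx : x ∈ G)
    (hG' : volume (G' ∩ connectedComponentIn G x) ≤ volume (connectedComponentIn G x) / 16) :
    ∃ y, y ≠ x ∧ Ι x y ⊆ G ∧ ENNReal.ofReal |y - x| ≤ volume G ∧
      volume (G' ∩ Ι x y) ≤ ENNReal.ofReal (|y - x| / 4) := by
  set C := connectedComponentIn G x
  have hxC : x ∈ C := mem_connectedComponentIn hx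
  have hC_pos : 0 < volume C := hG.connectedComponentIn.measure_pos volume ⟨x, hxC⟩
  have hCG : volume C ≤ volume G := measure_mono (connectedComponentIn_subset G x)
  have hC_fin : volume C ≠ ∞ := ne_top_of_le_ne_top hG_fin hCG
  set ℓ := volume.real C
  have hℓ : volume C = ENNReal.ofReal ℓ := (ofReal_measureReal hC_fin).symm
  have hℓ_pos : 0 < ℓ := ENNReal.toReal_pos hC_pos.ne' hC_fin
  obtain ⟨y, hyx, hyC⟩ := isPreconnected_connectedComponentIn.ordConnected.exists_uIoc_subset hxC
    (r := ℓ / 4) (by positivity)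
    (by rw [hℓ]; exact (ENNReal.ofReal_lt_ofReal_iff hℓ_pos).2 (by linarith))
  refine ⟨y, fun hy => by simp [hy] at hyx; linarith, hyC.trans (connectedComponentIn_subset G x),
    ?_, ?_⟩
  · calc ENNReal.ofReal |y - x| ≤ ENNReal.ofReal ℓ :=
          ENNReal.ofReal_le_ofReal (by rw [hyx]; linarith)
      _ ≤ volume G := hℓ ▸ hCG
  · calc volume (G' ∩ Ι x y) ≤ volume (G' ∩ C) := measure_mono (inter_subset_inter_right _ hyC)
      _ ≤ ENNReal.ofReal ℓ / 16 := hℓ ▸ hG'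
      _ = ENNReal.ofReal (|y - x| / 4) := by
        rw [hyx, div_div, ENNReal.ofReal_div_of_pos (by norm_num)]
        norm_num
lemma exists_isOpen_subset_volume_inter_connectedComponentIn_le {N G : Set ℝ} (hN : volume N = 0)
    (hG : IsOpen G) {δ : ℝ≥0∞} (hδ : 0 < δ) :
    ∃ G' ⊆ G, IsOpen G' ∧ N ∩ G ⊆ G' ∧ volume G' ≤ δ ∧
      ∀ x ∈ G, volume (G' ∩ connectedComponentIn G x) ≤ volume (connectedComponentIn G x) / 16 := by
  obtain ⟨W, hNW, hW, hWδ⟩ := Set.exists_isOpen_lt_of_lt N δ (hN ▸ hδ)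
  have hU : ∀ ε : ℝ≥0∞, ∃ U, 0 < ε → N ⊆ U ∧ IsOpen U ∧ volume U < ε := fun ε => by
    by_cases hε : 0 < ε
    · exact (Set.exists_isOpen_lt_of_lt N ε (hN ▸ hε)).imp fun _ h _ => h
    · exact ⟨∅, fun h => absurd h hε⟩
  choose U hU using hU
  have hC_pos : ∀ x ∈ G, 0 < volume (connectedComponentIn G x) / 16 := fun x hx =>
    ENNReal.div_pos (hG.connectedComponentIn.measure_pos volume
      ⟨x, mem_connectedComponentIn hx⟩).ne' (by norm_num)
  -- `V` depends on the component only, so all points of a component contribute the same set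
  let V : Set ℝ → Set ℝ := fun C => W ∩ U (volume C / 16) ∩ C
  refine ⟨⋃ x ∈ G, V (connectedComponentIn G x),
    iUnion₂_subset fun x _ => inter_subset_right.trans (connectedComponentIn_subset G x),
    isOpen_biUnion fun x hx => (hW.inter (hU _ (hC_pos x hx)).2.1).inter hG.connectedComponentIn,
    fun t ht => mem_biUnion ht.2 ⟨⟨hNW ht.1, (hU _ (hC_pos t ht.2)).1 ht.1⟩,
      mem_connectedComponentIn ht.2⟩,
    (measure_mono (iUnion₂_subset fun _ _ => inter_subset_left.trans inter_subset_left)).trans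
      hWδ.le, fun x hx => ?_⟩
  have hsub : (⋃ z ∈ G, V (connectedComponentIn G z)) ∩ connectedComponentIn G x ⊆
      V (connectedComponentIn G x) := by
    rintro t ⟨ht, htx⟩
    obtain ⟨z, -, htz⟩ := mem_iUnion₂.1 ht
    rwa [(connectedComponentIn_eq htz.2).trans (connectedComponentIn_eq htx).symm] at htz
  exact (measure_mono (hsub.trans (inter_subset_left.trans inter_subset_right))).trans
    (hU _ (hC_pos x hx)).2.2.le

lemma exists_nested_isOpen_volume_inter_connectedComponentIn_le {N : Set ℝ} (hN : volume N = 0) :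
    ∃ G : ℕ → Set ℝ, (∀ k, IsOpen (G k)) ∧ (∀ k, N ⊆ G k) ∧ (∀ k, G (k + 1) ⊆ G k) ∧
      (∀ k, volume (G k) ≤ 2⁻¹ ^ k) ∧
      ∀ k, ∀ x ∈ G k, volume (G (k + 1) ∩ connectedComponentIn (G k) x) ≤
        volume (connectedComponentIn (G k) x) / 16 := by
  choose next hnext_sub hnext_open hnext_N hnext_vol hnext_comp using
    fun (S : TopologicalSpace.Opens ℝ) (k : ℕ) =>
      exists_isOpen_subset_volume_inter_connectedComponentIn_le hN S.isOpen
        (δ := 2⁻¹ ^ (k + 1)) (ENNReal.pow_pos (by norm_num) _)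
  obtain ⟨G₀, hNG₀, hG₀, hG₀_vol⟩ := Set.exists_isOpen_lt_of_lt N 1 (hN ▸ zero_lt_one)
  let G : ℕ → TopologicalSpace.Opens ℝ := fun k =>
    Nat.rec ⟨G₀, hG₀⟩ (fun k S => ⟨next S k, hnext_open S k⟩) k
  have hNG : ∀ k, N ⊆ SetLike.coe (G k) := by
    intro k
    induction k with
    | zero => exact hNG₀
    | succ k ih => exact fun t ht => hnext_N _ _ ⟨ht, ih ht⟩
  refine ⟨fun k => SetLike.coe (G k), fun k => (G k).isOpen, hNG, fun k => hnext_sub _ _, ?_,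
    fun k => hnext_comp _ _⟩
  rintro (_ | k)
  · rw [pow_zero]
    exact hG₀_vol.le
  · exact hnext_vol _ _
noncomputable def indicatorPrimitive (A : Set ℝ) (x : ℝ) : ℝ := ∫ t in (0)..x, A.indicator 1 t

section indicatorPrimitive

variable {A : Set ℝ} (hA : MeasurableSet A)
include hA

lemma indicatorPrimitive_sub (x y : ℝ) :
    indicatorPrimitive A y - indicatorPrimitive A x = ∫ t in x..y, A.indicator 1 t := by
  have hint : ∀ a b : ℝ, IntervalIntegrable (A.indicator 1) volume a b := fun a b =>
    intervalIntegrable_iff.2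
      ((intervalIntegrable_iff.1 (intervalIntegrable_const (c := (1 : ℝ)))).indicator hA)
  exact intervalIntegral.integral_interval_sub_left (hint 0 y) (hint 0 x)

lemma lipschitzWith_indicatorPrimitive : LipschitzWith 1 (indicatorPrimitive A) := by
  refine LipschitzWith.of_dist_le_mul fun x y => ?_
  rw [dist_comm, dist_eq_norm, indicatorPrimitive_sub hA, NNReal.coe_one, Real.dist_eq,
    abs_sub_comm]
  exact intervalIntegral.norm_integral_le_of_norm_le_const fun t _ => by
    by_cases ht : t ∈ A <;> simp [ht]

lemma slope_indicatorPrimitive (x y : ℝ) :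
    slope (indicatorPrimitive A) x y = volume.real (A ∩ Ι x y) / |y - x| := by
  rw [slope_def_field, indicatorPrimitive_sub hA]
  rcases le_total x y with h | h
  · rw [intervalIntegral.integral_of_le h, integral_indicator_one hA, measureReal_restrict_apply hA,
      uIoc_of_le h, abs_of_nonneg (sub_nonneg.2 h)]
  · rw [intervalIntegral.integral_of_ge h, integral_indicator_one hA, measureReal_restrict_apply hA,
      uIoc_of_ge h, abs_of_nonpos (sub_nonpos.2 h), div_neg, neg_div]

lemma le_slope_indicatorPrimitive {x y : ℝ} (hyx : y ≠ x)
    (h : volume (Ι x y \ A) ≤ ENNReal.ofReal (|y - x| / 4)) :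
    3 / 4 ≤ slope (indicatorPrimitive A) x y := by
  have hpos : 0 < |y - x| := abs_pos.2 (sub_ne_zero.2 hyx)
  have hsplit : volume.real (A ∩ Ι x y) + volume.real (Ι x y \ A) = |y - x| := by
    rw [inter_comm, measureReal_inter_add_sdiff hA (by simp [Real.volume_uIoc]),
      measureReal_def, Real.volume_uIoc, ENNReal.toReal_ofReal (abs_nonneg _)]
  have hdiff : volume.real (Ι x y \ A) ≤ |y - x| / 4 :=
    ENNReal.toReal_le_of_le_ofReal (by positivity) h
  rw [slope_indicatorPrimitive hA, le_div_iff₀ hpos]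
  linarith

lemma slope_indicatorPrimitive_le {x y : ℝ}
    (h : volume (A ∩ Ι x y) ≤ ENNReal.ofReal (|y - x| / 4)) :
    slope (indicatorPrimitive A) x y ≤ 1 / 4 := by
  rw [slope_indicatorPrimitive hA]
  rcases eq_or_ne y x with rfl | hyx
  · simp
  have hA_vol : volume.real (A ∩ Ι x y) ≤ |y - x| / 4 :=
    ENNReal.toReal_le_of_le_ofReal (by positivity) h
  rw [div_le_iff₀ (abs_pos.2 (sub_ne_zero.2 hyx))]
  linarith

end indicatorPrimitive

lemma not_differentiableAt_of_frequently_slope {f : ℝ → ℝ} {x a b : ℝ} (hba : b < a)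
    (ha : ∃ᶠ y in 𝓝[≠] x, a ≤ slope f x y) (hb : ∃ᶠ y in 𝓝[≠] x, slope f x y ≤ b) :
    ¬DifferentiableAt ℝ f x := fun hf =>
  have h := hf.hasDerivAt.tendsto_slope
  hba.not_ge ((ge_of_tendsto_of_frequently h ha).trans (le_of_tendsto_of_frequently h hb))

theorem exists_lipschitzWith_not_differentiableAt_of_volume_eq_zero {N : Set ℝ}
    (hN : volume N = 0) : ∃ g : ℝ → ℝ, LipschitzWith 1 g ∧ ∀ x ∈ N, ¬DifferentiableAt ℝ g x := by
  obtain ⟨G, hG, hNG, hG_succ, hG_vol, hG_comp⟩ :=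
    exists_nested_isOpen_volume_inter_connectedComponentIn_le hN
  have hG_anti : Antitone G := antitone_nat_of_succ_le hG_succ
  set A := ⋃ k, G (2 * k) \ G (2 * k + 1)
  have hA : MeasurableSet A := .iUnion fun k => (hG _).measurableSet.diff (hG _).measurableSet
  have hA_even : ∀ k, G (2 * k) \ A ⊆ G (2 * k + 1) := fun k t ht =>
    by_contra fun h => ht.2 (mem_iUnion.2 ⟨k, ht.1, h⟩)
  have hA_odd : ∀ k, A ∩ G (2 * k + 1) ⊆ G (2 * k + 2) := by
    rintro k t ⟨htA, ht⟩
    obtain ⟨j, htj, htj'⟩ := mem_iUnion.1 htA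
    rcases le_or_gt j k with hjk | hkj
    · exact absurd (hG_anti (by omega : 2 * j + 1 ≤ 2 * k + 1) ht) htj'
    · exact hG_anti (by omega : 2 * k + 2 ≤ 2 * j) htj
  refine ⟨indicatorPrimitive A, lipschitzWith_indicatorPrimitive hA, fun x hx => ?_⟩
  have hG_fin : ∀ k, volume (G k) ≠ ∞ := fun k =>
    ne_top_of_le_ne_top (ENNReal.pow_ne_top (by norm_num)) (hG_vol k)
  choose y hyx hyG hy_len hy_small using fun k =>
    exists_uIoc_subset_of_volume_inter_connectedComponentIn_le (hG k) (hG_fin k) (hNG k hx)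
      (hG_comp k x (hNG k hx))
  have hy : Tendsto y atTop (𝓝[≠] x) := by
    refine tendsto_nhdsWithin_of_tendsto_nhds_of_eventually_within _ ?_ (.of_forall hyx)
    have h : Tendsto (fun k => ENNReal.ofReal |y k - x|) atTop (𝓝 0) :=
      tendsto_of_tendsto_of_tendsto_of_le_of_le tendsto_const_nhds
        (ENNReal.tendsto_pow_atTop_nhds_zero_of_lt_one (by norm_num))
        (fun _ => zero_le) fun k => (hy_len k).trans (hG_vol k)
    rw [tendsto_iff_norm_sub_tendsto_zero]
    simpa [Function.comp_def] using (ENNReal.tendsto_toReal ENNReal.zero_ne_top).comp h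
  refine not_differentiableAt_of_frequently_slope (a := 3 / 4) (b := 1 / 4) (by norm_num)
    (hy.frequently (frequently_atTop.2 fun n => ⟨2 * n, by omega, ?_⟩))
    (hy.frequently (frequently_atTop.2 fun n => ⟨2 * n + 1, by omega, ?_⟩))
  · refine le_slope_indicatorPrimitive hA (hyx _) ((measure_mono ?_).trans (hy_small _))
    exact fun t ht => ⟨hA_even n ⟨hyG _ ht.1, ht.2⟩, ht.1⟩
  · refine slope_indicatorPrimitive_le hA ((measure_mono ?_).trans (hy_small _))
    exact fun t ht => ⟨hA_odd n ⟨ht.1, hyG _ ht.2⟩, ht.2⟩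

lemma DifferentiableAt.of_comp_of_rightInverse {𝕜 E F G : Type*} [NontriviallyNormedField 𝕜]
    [NormedAddCommGroup E] [NormedSpace 𝕜 E] [NormedAddCommGroup F] [NormedSpace 𝕜 F]
    [NormedAddCommGroup G] [NormedSpace 𝕜 G] {f : F → G} {L : E →L[𝕜] F} {R : F →L[𝕜] E}
    (hLR : ∀ t, L (R t) = t) {x : E} (hf : DifferentiableAt 𝕜 (f ∘ L) x) :
    DifferentiableAt 𝕜 f (L x) := by
  have hsection : (f ∘ L) ∘ (fun t => x + R (t - L x)) = f := funext fun t => by simp [hLR]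
  rw [← hsection]
  refine DifferentiableAt.comp (L x) ?_ (by fun_prop)
  simpa using hf

lemma Real.volume_eq_zero_of_dimH_lt_one {s : Set ℝ} (hs : dimH s < 1) : volume s = 0 :=
  measure_zero_of_dimH_lt (d := 1)
    (by simp [hausdorffMeasure_real, Measure.AbsolutelyContinuous.rfl]) (by simpa using hs)

theorem stmt4 (d : ℕ) (hd : 1 ≤ d) (E : Set (EuclideanSpace ℝ (Fin d)))
    (hE : ∀ f : EuclideanSpace ℝ (Fin d) → ℝ, (∃ K : NNReal, LipschitzWith K f) →
      ∃ x ∈ E, DifferentiableAt ℝ f x) :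
    1 ≤ dimH E := by
  by_contra! hE_dim
  set i : Fin d := ⟨0, hd⟩
  set π := EuclideanSpace.proj (𝕜 := ℝ) i
  have hπE : volume (π '' E) = 0 :=
    Real.volume_eq_zero_of_dimH_lt_one ((π.lipschitz.dimH_image_le E).trans_lt hE_dim)
  obtain ⟨g, hg, hg_nd⟩ := exists_lipschitzWith_not_differentiableAt_of_volume_eq_zero hπE
  obtain ⟨x, hxE, hx⟩ := hE (g ∘ π) ⟨_, hg.comp π.lipschitz⟩
  refine hg_nd (π x) (mem_image_of_mem π hxE) (hx.of_comp_of_rightInverse (R :=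
    ContinuousLinearMap.toSpanSingleton ℝ (EuclideanSpace.single i 1)) fun t => ?_)
  simp [π]
end

section
/- With the sets M_k(λ) as in the construction (built from a decreasing null sequence w_n > 0 and compact sets R_n containing all segments between points of finite nets R(w_{n-1}/n)): if 0 ≤ λ < λ+ψ ≤ 1, η ∈ (0,1), Δ > 0, k ≥ 1/(ψη), and Δ > ψ·w_n for some n ≤ (1+λ)k, then there exists α ∈ (0, ηΔ) such that [r,s] ⊆ M_l(λ+ψ) for every r, s ∈ R(α) and every l ≥ k. -/
open Metric Set

theorem stmt7 (d : ℕ)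
    (R : Set (EuclideanSpace ℝ (Fin d))) (hRsub : R ⊆ Metric.ball 0 1) (hRcount : R.Countable)
    (Rnet : ℝ → Set (EuclideanSpace ℝ (Fin d)))
    (hRnetsub : ∀ ε > 0, Rnet ε ⊆ R) (hRnetfin : ∀ ε > 0, (Rnet ε).Finite)
    (hRnet : ∀ ε > 0, ∀ x ∈ Metric.ball (0 : EuclideanSpace ℝ (Fin d)) 1,
      ∃ r ∈ Rnet ε, ‖r - x‖ < ε)
    (w : ℕ → ℝ) (hwpos : ∀ n, 0 < w n) (hw : ∀ k, 1 ≤ k → w k < w (k - 1) / 2)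
    (Rset : ℕ → Set (EuclideanSpace ℝ (Fin d)))
    (hRset : ∀ k : ℕ, 1 ≤ k → Rset k =
      (⋃ r ∈ Rnet (w (k - 1) / k), ⋃ s ∈ Rnet (w (k - 1) / k), segment ℝ r s) ∪ Rset (k - 1))
    (M : ℕ → ℝ → Set (EuclideanSpace ℝ (Fin d)))
    (hM : ∀ k lam, M k lam =
      ⋃ n ∈ {n : ℕ | k ≤ n ∧ (n : ℝ) ≤ (1 + lam) * k}, Metric.cthickening (lam * w n) (Rset n))
    (lam ψ : ℝ) (hlam : 0 ≤ lam) (hψ : 0 < ψ) (hlamψ : lam + ψ ≤ 1)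
    (η : ℝ) (hη : η ∈ Set.Ioo (0 : ℝ) 1) (Δ : ℝ) (hΔ : 0 < Δ)
    (k : ℕ) (hk : 1 / (ψ * η) ≤ (k : ℝ))
    (hΔw : ∃ n : ℕ, (n : ℝ) ≤ (1 + lam) * k ∧ ψ * w n < Δ) :
    ∃ α ∈ Set.Ioo 0 (η * Δ), ∀ r ∈ Rnet α, ∀ s ∈ Rnet α, ∀ l : ℕ, k ≤ l →
      segment ℝ r s ⊆ M l (lam + ψ) := by

  obtain ⟨hη0, hη1⟩ := hη
  obtain ⟨n0, hn0le, hn0w⟩ := hΔw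
  have hψη : 0 < ψ * η := mul_pos hψ hη0
  have hk1 : (1:ℝ) ≤ ψ * η * (k:ℝ) := by
    rw [div_le_iff₀ hψη] at hk
    linarith
  -- w is antitone
  have hwanti : ∀ a b : ℕ, a ≤ b → w b ≤ w a := by
    intro a b hab
    induction b with
    | zero => interval_cases a; exact le_refl _
    | succ b ih =>
      rcases Nat.lt_or_ge a (b+1) with h | h
      · have h1 := hw (b+1) (by omega)
        simp only [Nat.add_sub_cancel] at h1
        have h2 := ih (by omega)
        have h3 := hwpos b
        linarith
      · have : a = b + 1 := by omega
        subst this; exact le_refl _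
  -- Rset is monotone
  have hRmono : ∀ a b : ℕ, a ≤ b → Rset a ⊆ Rset b := by
    intro a b hab
    induction b with
    | zero => interval_cases a; exact subset_refl _
    | succ b ih =>
      rcases Nat.lt_or_ge a (b+1) with h | h
      · have h1 := hRset (b+1) (by omega)
        simp only [Nat.add_sub_cancel] at h1
        rw [h1]
        exact (ih (by omega)).trans subset_union_right
      · have : a = b + 1 := by omega
        subst this; exact subset_refl _
  set n := max n0 k with hn
  have hkn : k ≤ n := le_max_right _ _
  have hknR : (k:ℝ) ≤ (n:ℝ) := Nat.cast_le.2 hkn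
  have hwn : ψ * w n < Δ :=
    lt_of_le_of_lt (mul_le_mul_of_nonneg_left (hwanti n0 n (le_max_left _ _)) hψ.le) hn0w
  have hnle : (n:ℝ) ≤ (1 + lam) * k := by
    rcases max_choice n0 k with h | h <;> rw [hn, h]
    · exact hn0le
    · nlinarith [(Nat.cast_nonneg k : (0:ℝ) ≤ (k:ℝ))]
  have hwnpos := hwpos n
  have hn1pos : (0:ℝ) < (n:ℝ) + 1 := by positivity
  refine ⟨w n / ((n:ℝ) + 1), ⟨div_pos hwnpos hn1pos, ?_⟩, ?_⟩
  · rw [div_lt_iff₀ hn1pos]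
    have h2 : (1:ℝ) ≤ ψ * η * ((n:ℝ) + 1) := by
      nlinarith [mul_le_mul_of_nonneg_left hknR hψη.le]
    have h3 : ψ * w n * η * ((n:ℝ)+1) < Δ * η * ((n:ℝ)+1) :=
      mul_lt_mul_of_pos_right (mul_lt_mul_of_pos_right hwn hη0) hn1pos
    nlinarith [mul_le_mul_of_nonneg_left h2 hwnpos.le]
  · intro r hr s hs l hl x hx
    -- segment r s ⊆ Rset (n+1)
    have hα : w n / ((n:ℝ) + 1) = w ((n+1) - 1) / ((n+1 : ℕ) : ℝ) := by
      simp only [Nat.add_sub_cancel]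
      push_cast
      ring
    rw [hα] at hr hs
    have hseg : x ∈ Rset (n+1) := by
      rw [hRset (n+1) (by omega)]
      left
      exact mem_iUnion₂.2 ⟨r, hr, mem_iUnion₂.2 ⟨s, hs, hx⟩⟩
    rw [hM]
    have hlR : (k:ℝ) ≤ (l:ℝ) := Nat.cast_le.2 hl
    refine mem_iUnion₂.2 ⟨max l (n+1), ⟨le_max_left _ _, ?_⟩, ?_⟩
    · rw [Nat.cast_max]
      rcases le_total ((n:ℝ)+1) (l:ℝ) with h | h
      · rw [max_eq_left (by push_cast; linarith)]
        nlinarith [(Nat.cast_nonneg l : (0:ℝ) ≤ (l:ℝ))]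
      · rw [max_eq_right (by push_cast; linarith)]
        push_cast
        have h1 : (1:ℝ) ≤ ψ * l := by nlinarith
        nlinarith
    · exact self_subset_cthickening _ (hRmono (n+1) (max l (n+1)) (le_max_right _ _) hseg)
end

section
/- With T_λ = ⋂_{k≥1} M_k(λ) as in the construction: for each η, ψ > 0 there exists Δ₀ > 0 such that whenever Δ ∈ (0, Δ₀), 0 ≤ λ < λ+ψ ≤ 1, and x ∈ T_λ, there exists α ∈ (0, ηΔ) such that for every r, s ∈ R(α) ∩ B(x, Δ) the segment [r,s] is contained in T_{λ+ψ}. -/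
open Metric Set

private lemma wgap {w : ℕ → ℝ} (hwpos : ∀ n, 0 < w n)
    (hw : ∀ k, 1 ≤ k → w k < w (k - 1) / 2) :
    ∀ a g : ℕ, 2 ^ g * w (a + g) ≤ w a := by
  intro a g
  induction g with
  | zero => simp
  | succ g ih =>
    have h1 : w (a + g + 1) < w (a + g) / 2 := by
      have := hw (a + g + 1) (by omega)
      simpa using this
    have h2 : (0:ℝ) < 2 ^ g := by positivity
    calc 2 ^ (g+1) * w (a + (g+1)) = 2 ^ g * (2 * w (a + g + 1)) := by
          rw [pow_succ]; ring_nf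
      _ ≤ 2 ^ g * w (a + g) := by nlinarith [hwpos (a+g+1)]
      _ ≤ w a := ih

private lemma wmono {w : ℕ → ℝ} (hwpos : ∀ n, 0 < w n)
    (hw : ∀ k, 1 ≤ k → w k < w (k - 1) / 2) :
    ∀ a b : ℕ, a ≤ b → w b ≤ w a := by
  intro a b hab
  have h := wgap hwpos hw a (b - a)
  have hb : a + (b - a) = b := by omega
  rw [hb] at h
  have h2 : (1:ℝ) ≤ 2 ^ (b - a) := one_le_pow₀ (by norm_num)
  nlinarith [hwpos b]

set_option maxHeartbeats 1000000 in
theorem stmt8 (d : ℕ)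
    (R : Set (EuclideanSpace ℝ (Fin d))) (hRsub : R ⊆ Metric.ball 0 1) (hRcount : R.Countable)
    (Rnet : ℝ → Set (EuclideanSpace ℝ (Fin d)))
    (hRnetsub : ∀ ε > 0, Rnet ε ⊆ R) (hRnetfin : ∀ ε > 0, (Rnet ε).Finite)
    (hRnet : ∀ ε > 0, ∀ x ∈ Metric.ball (0 : EuclideanSpace ℝ (Fin d)) 1,
      ∃ r ∈ Rnet ε, ‖r - x‖ < ε)
    (w : ℕ → ℝ) (hwpos : ∀ n, 0 < w n) (hw : ∀ k, 1 ≤ k → w k < w (k - 1) / 2)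
    (Rset : ℕ → Set (EuclideanSpace ℝ (Fin d)))
    (hRset : ∀ k : ℕ, 1 ≤ k → Rset k =
      (⋃ r ∈ Rnet (w (k - 1) / k), ⋃ s ∈ Rnet (w (k - 1) / k), segment ℝ r s) ∪ Rset (k - 1))
    (M : ℕ → ℝ → Set (EuclideanSpace ℝ (Fin d)))
    (hM : ∀ k lam, M k lam =
      ⋃ n ∈ {n : ℕ | k ≤ n ∧ (n : ℝ) ≤ (1 + lam) * k}, Metric.cthickening (lam * w n) (Rset n))
    (T : ℝ → Set (EuclideanSpace ℝ (Fin d)))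
    (hT : ∀ lam, T lam = ⋂ k ∈ {k : ℕ | 1 ≤ k}, M k lam)
    (η ψ : ℝ) (hη : 0 < η) (hψ : 0 < ψ) :
    ∃ Δ₀ > 0, ∀ Δ ∈ Set.Ioo 0 Δ₀, ∀ lam : ℝ, 0 ≤ lam → lam + ψ ≤ 1 →
      ∀ x ∈ T lam, ∃ α ∈ Set.Ioo 0 (η * Δ),
        ∀ r ∈ Rnet α ∩ Metric.ball x Δ, ∀ s ∈ Rnet α ∩ Metric.ball x Δ,
          segment ℝ r s ⊆ T (lam + ψ) := by
  -- monotonicity of Rset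
  have hRmono : ∀ a b : ℕ, a ≤ b → Rset a ⊆ Rset b := by
    intro a b hab
    have key : ∀ g : ℕ, Rset a ⊆ Rset (a + g) := by
      intro g
      induction g with
      | zero => simp
      | succ g ih =>
        have h1 := hRset (a + g + 1) (by omega)
        have h2 : a + g + 1 - 1 = a + g := by omega
        rw [h2] at h1
        calc Rset a ⊆ Rset (a + g) := ih
          _ ⊆ Rset (a + (g+1)) := by rw [show a + (g+1) = a+g+1 from rfl, h1]; exact subset_union_right
    have := key (b - a)
    rwa [show a + (b - a) = b by omega] at this
  -- choose m with 1/(η*ψ) < 2^m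
  obtain ⟨m, hm⟩ := pow_unbounded_of_one_lt (1 / (η * ψ)) (one_lt_two (α := ℝ))
  -- choose K₁
  obtain ⟨K, hK⟩ := exists_nat_ge (((m:ℝ) + 2) * (2 + ψ) / ψ)
  set K₁ := max K 2 with hK₁def
  have hK₁2 : 2 ≤ K₁ := le_max_right _ _
  have hK₁K : ((m:ℝ) + 2) * (2 + ψ) / ψ ≤ K₁ := le_trans hK (by exact_mod_cast Nat.cast_le.mpr (le_max_left _ _))
  have hKpos : (0:ℝ) < K₁ := by exact_mod_cast (show 0 < K₁ by omega)
  refine ⟨w (K₁ - 1) / (K₁ * η), div_pos (hwpos _) (mul_pos hKpos hη), ?_⟩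
  rintro Δ ⟨hΔ0, hΔlt⟩ lam hlam0 hlamψ x hx
  -- for k ≤ K₁, η*Δ < w(k-1)/k
  have hsmall : ∀ k : ℕ, 1 ≤ k → k ≤ K₁ → η * Δ < w (k - 1) / k := by
    intro k hk1 hkK
    have h1 : η * Δ < w (K₁ - 1) / K₁ := by
      rw [lt_div_iff₀ (mul_pos hKpos hη)] at hΔlt
      rw [lt_div_iff₀ hKpos]
      nlinarith
    have h2 : w (K₁ - 1) / K₁ ≤ w (k - 1) / k := by
      have hw1 : w (K₁ - 1) ≤ w (k - 1) := wmono hwpos hw _ _ (by omega)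
      have hkpos : (0:ℝ) < k := by exact_mod_cast hk1
      rw [div_le_div_iff₀ hKpos hkpos]
      have hck : (k:ℝ) ≤ K₁ := by exact_mod_cast hkK
      nlinarith [hwpos (K₁ - 1), hwpos (k - 1)]
    linarith
  -- existence of k with w(k-1)/k < η*Δ
  have hex : ∃ k : ℕ, 1 ≤ k ∧ w (k - 1) / k < η * Δ := by
    obtain ⟨j, hj⟩ := pow_unbounded_of_one_lt (w 0 / (η * Δ)) (one_lt_two (α := ℝ))
    refine ⟨j + 1, by omega, ?_⟩
    have hg := wgap hwpos hw 0 j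
    simp only [Nat.zero_add] at hg
    have h2j : (0:ℝ) < 2 ^ j := by positivity
    have hwj : w j < η * Δ := by
      rw [div_lt_iff₀ (by positivity)] at hj
      nlinarith [hwpos j]
    have : w (j + 1 - 1) / (j + 1 : ℕ) ≤ w j := by
      simp only [Nat.add_sub_cancel]
      rw [div_le_iff₀ (by positivity)]
      nlinarith [hwpos j, (show (1:ℝ) ≤ ((j+1:ℕ):ℝ) by exact_mod_cast Nat.succ_le_succ (Nat.zero_le j))]
    linarith
  classical
  obtain ⟨k₀, ⟨hk₀1, hk₀lt⟩, hk₀min'⟩ :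
      ∃ k₀ : ℕ, (1 ≤ k₀ ∧ w (k₀ - 1) / k₀ < η * Δ) ∧
        ∀ k, k < k₀ → ¬(1 ≤ k ∧ w (k - 1) / k < η * Δ) :=
    ⟨Nat.find hex, Nat.find_spec hex, fun k hk => Nat.find_min hex hk⟩
  have hk₀min : ∀ k, k < k₀ → 1 ≤ k → η * Δ ≤ w (k - 1) / k := by
    intro k hk hk1
    have := hk₀min' k hk
    push_neg at this
    exact le_of_not_gt (fun h => (this hk1).not_gt h)
  have hK₁k₀ : K₁ < k₀ := by
    by_contra h
    push_neg at h
    exact absurd hk₀lt (not_lt.mpr (hsmall k₀ hk₀1 h).le)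
  have hk₀3 : 3 ≤ k₀ := by omega
  have hk₀pos : (0:ℝ) < k₀ := by exact_mod_cast (show 0 < k₀ by omega)
  refine ⟨w (k₀ - 1) / k₀, ⟨div_pos (hwpos _) hk₀pos, hk₀lt⟩, ?_⟩
  rintro r ⟨hrnet, hrball⟩ s ⟨hsnet, hsball⟩
  -- segment ⊆ Rset k₀
  have hsegR : segment ℝ r s ⊆ Rset k₀ := by
    rw [hRset k₀ hk₀1]
    intro y hy
    exact Or.inl (mem_iUnion₂.mpr ⟨r, hrnet, mem_iUnion₂.mpr ⟨s, hsnet, hy⟩⟩)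
  have hsegB : segment ℝ r s ⊆ ball x Δ := (convex_ball x Δ).segment_subset hrball hsball
  intro y hy
  rw [hT]
  refine mem_iInter₂.mpr fun k hk => ?_
  rw [hM]
  simp only [mem_setOf_eq] at hk
  by_cases hcase : (k₀ : ℝ) ≤ (1 + (lam + ψ)) * k
  · -- n = max k k₀
    refine mem_iUnion₂.mpr ⟨max k k₀, ⟨le_max_left _ _, ?_⟩, ?_⟩
    · rw [Nat.cast_max]
      refine max_le ?_ hcase
      have : (0:ℝ) ≤ k := Nat.cast_nonneg k
      nlinarith
    · exact self_subset_cthickening _ (hRmono k₀ (max k k₀) (le_max_right _ _) (hsegR hy))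
  · push_neg at hcase
    -- use x ∈ M k lam
    rw [hT] at hx
    have hxk := mem_iInter₂.mp hx k hk
    rw [hM] at hxk
    obtain ⟨n, hn, hxn⟩ := mem_iUnion₂.mp hxk
    obtain ⟨hn1, hn2⟩ := hn
    have hkpos : (0:ℝ) < k := by exact_mod_cast hk
    have hlam1 : lam ≤ 1 := by linarith
    have hnk : (n:ℝ) ≥ k := by exact_mod_cast hn1
    -- (1+ψ/2)*n < k₀
    have h1 : (1 + ψ/2) * n < k₀ := by
      have h2k : (n:ℝ) ≤ 2 * k := by nlinarith
      nlinarith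
    -- n + m + 2 ≤ k₀ (as naturals)
    have h2 : (n:ℝ) + (m + 2) < k₀ := by
      have hKk : (K₁ : ℝ) ≤ k₀ := by exact_mod_cast hK₁k₀.le
      have h3 : ((m:ℝ) + 2) * (2 + ψ) ≤ ψ * k₀ := by
        rw [div_le_iff₀ hψ] at hK₁K
        nlinarith
      have h4 : (2 + ψ) * ((n:ℝ) + (m + 2)) < (2 + ψ) * k₀ := by nlinarith
      exact lt_of_mul_lt_mul_left h4 (by positivity)
    have h2' : n + m + 2 ≤ k₀ := by exact_mod_cast (by push_cast; linarith : ((n + m + 2 : ℕ) : ℝ) ≤ (k₀:ℝ))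
    -- Δ ≤ ψ * w n
    have hΔψ : Δ ≤ ψ * w n := by
      have hgap := wgap hwpos hw n (k₀ - 2 - n)
      rw [show n + (k₀ - 2 - n) = k₀ - 2 by omega] at hgap
      have hmle : (2:ℝ) ^ m ≤ 2 ^ (k₀ - 2 - n) :=
        pow_le_pow_right₀ (by norm_num) (by omega)
      have hmin := hk₀min (k₀ - 1) (by omega) (by omega)
      rw [show k₀ - 1 - 1 = k₀ - 2 by omega] at hmin
      have hk₁1 : (1:ℝ) ≤ ((k₀ - 1 : ℕ):ℝ) := by exact_mod_cast (by omega : 1 ≤ k₀ - 1)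
      have hηΔw : η * Δ ≤ w (k₀ - 2) :=
        hmin.trans (div_le_self (hwpos _).le hk₁1)
      have h2m : 2 ^ m * w (k₀ - 2) ≤ w n :=
        le_trans (mul_le_mul_of_nonneg_right hmle (hwpos _).le) hgap
      have h2mpos : (0:ℝ) < 2 ^ m := by positivity
      have hinv : 1 ≤ η * ψ * 2 ^ m := by
        rw [div_lt_iff₀ (by positivity)] at hm
        nlinarith
      have e1 : η * Δ * 2 ^ m ≤ w n := by nlinarith
      have e2 : w n ≤ w n * (η * ψ * 2 ^ m) := le_mul_of_one_le_right (hwpos n).le hinv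
      have e3 : η * Δ * 2 ^ m ≤ η * (ψ * w n) * 2 ^ m := by
        calc η * Δ * 2 ^ m ≤ w n := e1
          _ ≤ w n * (η * ψ * 2 ^ m) := e2
          _ = η * (ψ * w n) * 2 ^ m := by ring
      have := le_of_mul_le_mul_right e3 h2mpos
      exact le_of_mul_le_mul_left this hη
    refine mem_iUnion₂.mpr ⟨n, ⟨hn1, by nlinarith⟩, ?_⟩
    rw [Metric.mem_cthickening_iff]
    have hdy : dist y x < Δ := mem_ball.mp (hsegB hy)
    calc EMetric.infEdist y (Rset n) ≤ edist y x + EMetric.infEdist x (Rset n) :=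
          EMetric.infEdist_le_edist_add_infEdist
      _ ≤ ENNReal.ofReal (ψ * w n) + ENNReal.ofReal (lam * w n) := by
          gcongr
          · rw [edist_dist]
            exact ENNReal.ofReal_le_ofReal (by linarith)
          · exact Metric.mem_cthickening_iff.mp hxn
      _ = ENNReal.ofReal ((lam + ψ) * w n) := by
          rw [← ENNReal.ofReal_add (mul_nonneg hψ.le (hwpos n).le) (mul_nonneg hlam0 (hwpos n).le)]
          ring_nf
end

section
/- With the construction's notation, the set S = closure(⋃_{q<1} T_q) is nonempty and compact, satisfies S ⊆ T₁ ⊆ O ⊆ B(0,1), and has Hausdorff dimension at most one. -/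
open Metric Set

theorem stmt15 (d : ℕ)
    (O : ℕ → Set (EuclideanSpace ℝ (Fin d)))
    (hOopen : ∀ k, IsOpen (O k)) (hOsub : ∀ k, O k ⊆ Metric.ball 0 1)
    (hOanti : ∀ k, O (k + 1) ⊆ O k) (hOdim : dimH (⋂ k, O k) = 1)
    (w : ℕ → ℝ) (hwpos : ∀ n, 0 < w n) (hwanti : StrictAnti w)
    (Rset : ℕ → Set (EuclideanSpace ℝ (Fin d)))
    (hRcpt : ∀ n, IsCompact (Rset n)) (hRmono : Monotone Rset)
    (hR1 : (Rset 1).Nonempty)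
    (hRO : ∀ n, Metric.cthickening (w n) (Rset n) ⊆ O n)
    (M : ℕ → ℝ → Set (EuclideanSpace ℝ (Fin d)))
    (hM : ∀ k lam, M k lam =
      ⋃ n ∈ {n : ℕ | k ≤ n ∧ (n : ℝ) ≤ (1 + lam) * k}, Metric.cthickening (lam * w n) (Rset n))
    (T : ℝ → Set (EuclideanSpace ℝ (Fin d)))
    (hT : ∀ lam, T lam = ⋂ k ∈ {k : ℕ | 1 ≤ k}, M k lam)
    (S : Set (EuclideanSpace ℝ (Fin d)))
    (hS : S = closure (⋃ q ∈ Set.Ico (0 : ℝ) 1, T q)) :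
    S.Nonempty ∧ IsCompact S ∧ S ⊆ T 1 ∧ T 1 ⊆ ⋂ k, O k ∧
      (⋂ k, O k) ⊆ Metric.ball 0 1 ∧ dimH S ≤ 1 := by
  -- O is antitone
  have hOchain : ∀ {a b : ℕ}, a ≤ b → O b ⊆ O a := by
    intro a b h
    exact antitone_nat_of_succ_le (fun n => hOanti n) h
  -- monotonicity of T
  have hTmono : ∀ q lam : ℝ, q ≤ lam → T q ⊆ T lam := by
    intro q lam hq
    rw [hT, hT]
    refine Set.iInter₂_mono fun k hk => ?_
    rw [hM, hM]
    refine Set.iUnion₂_subset fun n hn => ?_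
    refine Set.subset_iUnion₂_of_subset n ⟨hn.1, ?_⟩ ?_
    · exact hn.2.trans (mul_le_mul_of_nonneg_right (by linarith) (Nat.cast_nonneg k))
    · exact Metric.cthickening_mono
        (mul_le_mul_of_nonneg_right hq (hwpos n).le) _
  -- each T λ is closed
  have hTclosed : ∀ lam : ℝ, IsClosed (T lam) := by
    intro lam
    rw [hT]
    refine isClosed_biInter fun k hk => ?_
    rw [hM]
    refine Set.Finite.isClosed_biUnion ?_ fun n _ => Metric.isClosed_cthickening
    refine (Set.finite_Iic (⌊(1 + lam) * k⌋₊)).subset fun n hn => ?_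
    exact Nat.le_floor hn.2
  -- union ⊆ T 1
  have hUsub : (⋃ q ∈ Set.Ico (0 : ℝ) 1, T q) ⊆ T 1 :=
    Set.iUnion₂_subset fun q hq => hTmono q 1 hq.2.le
  have hST1 : S ⊆ T 1 := by
    rw [hS]
    exact (hTclosed 1).closure_subset_iff.mpr hUsub
  -- T 1 ⊆ ⋂ O
  have hT1O : T 1 ⊆ ⋂ k, O k := by
    intro x hx
    rw [hT] at hx
    simp only [Set.mem_iInter, Set.mem_setOf_eq] at hx ⊢
    intro k
    have h := hx (k + 1) (Nat.le_add_left 1 k)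
    rw [hM] at h
    simp only [Set.mem_iUnion, Set.mem_setOf_eq] at h
    obtain ⟨n, ⟨hn1, _⟩, hxn⟩ := h
    rw [one_mul] at hxn
    exact hOchain (Nat.le_of_succ_le hn1) (hRO n hxn)
  -- ⋂ O ⊆ ball
  have hOball : (⋂ k, O k) ⊆ Metric.ball 0 1 :=
    (Set.iInter_subset O 0).trans (hOsub 0)
  -- Nonempty
  have hR1S : Rset 1 ⊆ S := by
    have hR1T0 : Rset 1 ⊆ T 0 := by
      intro x hx
      rw [hT]
      simp only [Set.mem_iInter, Set.mem_setOf_eq]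
      intro k hk
      rw [hM]
      simp only [Set.mem_iUnion, Set.mem_setOf_eq]
      refine ⟨k, ⟨le_refl k, by norm_num⟩, ?_⟩
      rw [zero_mul, Metric.cthickening_zero]
      exact subset_closure (hRmono hk hx)
    rw [hS]
    intro x hx
    exact subset_closure
      (Set.mem_biUnion (show (0:ℝ) ∈ Set.Ico (0:ℝ) 1 from ⟨le_refl 0, one_pos⟩) (hR1T0 hx))
  have hSne : S.Nonempty := hR1.mono hR1S
  -- compactness
  have hSclosed : IsClosed S := by rw [hS]; exact isClosed_closure
  have hSbdd : Bornology.IsBounded S :=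
    (Metric.isBounded_ball).subset ((hST1.trans hT1O).trans hOball)
  have hScpt : IsCompact S := Metric.isCompact_of_isClosed_isBounded hSclosed hSbdd
  -- dimension
  have hdim : dimH S ≤ 1 := by
    calc dimH S ≤ dimH (⋂ k, O k) := dimH_mono (hST1.trans hT1O)
    _ = 1 := hOdim
  exact ⟨hSne, hScpt, hST1, hT1O, hOball, hdim⟩
end
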